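/- Let d ≥ 2, n ≥ 2, let ω : ℝ → ℝ^d be C², let k_2, …, k_n ∈ ℤ^{d−1}, and let φ_2, …, φ_n : I → ℝ be C² on an open interval I ⊆ ℝ such that ⟨ω̃(s), k_j⟩ ≠ 0 for all s ∈ I and 2 ≤ j ≤ n, where ω̃(s) = (ω_1(s), …, ω_{d−1}(s)). Define H_n(θ, r) = ⟨ω(r_d), r⟩ − Σ_{j=2}^n φ_j(r_d) sin(2π⟨k_j, θ̃⟩), H_0(θ, r) = ⟨ω(r_d), r⟩, and Ψ_n(θ, r) = (θ̃, θ_d − (1/2π) Σ_{j=2}^n (d/ds)[φ_j(s)/⟨ω̃(s), k_j⟩] cos(2π⟨k_j, θ̃⟩), r̃ − Σ_{j=2}^n (φ_j(s)/⟨ω̃(s), k_j⟩) sin(2π⟨k_j, θ̃⟩) · k_j, s), where s = r_d. If (θ(t), r(t)) is a solution of Hamilton's equations for H_n on an interval J with r_d(t) ∈ I, then t ↦ Ψ_n(θ(t), r(t)) is a solution of Hamilton's equations for H_0 on J. -/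

import Mathlib

open Real Filter Set

noncomputable section

/-- The phase space `T^d × ℝ^d`, realized as pairs `(θ, r)` of functions `Fin d → ℝ`. -/
abbrev Phase (d : ℕ) := (Fin d → ℝ) × (Fin d → ℝ)

/-- `H` is `ℤ^d`-periodic in the angle variable `θ`. -/
def PeriodicTheta {d : ℕ} (H : Phase d → ℝ) : Prop :=
  ∀ (θ r : Fin d → ℝ) (m : Fin d → ℤ), H (fun i => θ i + (m i : ℝ), r) = H (θ, r)

/-- `H` is real entire: it is the restriction to `ℝ^d × ℝ^d` of a holomorphic
function on `ℂ^d × ℂ^d`. -/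
def RealEntire {d : ℕ} (H : Phase d → ℝ) : Prop :=
  ∃ F : (Fin d → ℂ) × (Fin d → ℂ) → ℂ, Differentiable ℂ F ∧
    ∀ θ r : Fin d → ℝ, F (fun i => (θ i : ℂ), fun i => (r i : ℂ)) = H (θ, r)

/-- `H` is of the form `(*)` with frequency `ω`:
`|H(θ,r) − ⟨ω,r⟩| ≤ C‖r‖²` for all `θ` and all `‖r‖ ≤ δ`. -/
def FormStar {d : ℕ} (H : Phase d → ℝ) (ω : Fin d → ℝ) : Prop :=
  ∃ C δ : ℝ, 0 < C ∧ 0 < δ ∧ ∀ θ r : Fin d → ℝ, ‖r‖ ≤ δ →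
    |H (θ, r) - ∑ i, ω i * r i| ≤ C * ‖r‖ ^ 2

/-- `(θ, r)` is a solution of Hamilton's equations for `H` on the set `J`:
`θ' = ∂H/∂r`, `r' = −∂H/∂θ`. -/
def IsSolutionOn {d : ℕ} (H : Phase d → ℝ) (θ r : ℝ → Fin d → ℝ) (J : Set ℝ) : Prop :=
  ∀ t ∈ J, ∀ i : Fin d,
    HasDerivWithinAt (fun u => θ u i) (fderiv ℝ H (θ t, r t) (0, Pi.single i 1)) J t ∧
    HasDerivWithinAt (fun u => r u i) (-(fderiv ℝ H (θ t, r t) (Pi.single i 1, 0))) J t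

/-- Embedding of the first `d − 1` indices into `Fin d`. -/
def emb (d : ℕ) : Fin (d - 1) → Fin d := Fin.castLE (Nat.sub_le d 1)

/-- The last index of `Fin d`. -/
def lst (d : ℕ) (hd : 0 < d) : Fin d := ⟨d - 1, Nat.sub_lt hd Nat.one_pos⟩

/-- `⟨ω̃(s), k_j⟩ = Σ_{i=1}^{d−1} ω_i(s) k_{j,i}`. -/
def Aj (d : ℕ) (ω : ℝ → Fin d → ℝ) (k : ℕ → Fin (d - 1) → ℤ) (j : ℕ) (s : ℝ) : ℝ :=
  ∑ i, ω s (emb d i) * (k j i : ℝ)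

/-- `H_n(θ, r) = ⟨ω(r_d), r⟩ − Σ_{j=2}^n φ_j(r_d) sin(2π⟨k_j, θ̃⟩)`. -/
def Hn (d n : ℕ) (hd : 0 < d) (ω : ℝ → Fin d → ℝ) (k : ℕ → Fin (d - 1) → ℤ)
    (φ : ℕ → ℝ → ℝ) (z : Phase d) : ℝ :=
  (∑ i, ω (z.2 (lst d hd)) i * z.2 i) -
    ∑ j ∈ Finset.Icc 2 n, φ j (z.2 (lst d hd)) *
      Real.sin (2 * π * ∑ i, (k j i : ℝ) * z.1 (emb d i))

/-- `H_0(θ, r) = ⟨ω(r_d), r⟩`. -/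
def H0 (d : ℕ) (hd : 0 < d) (ω : ℝ → Fin d → ℝ) (z : Phase d) : ℝ :=
  ∑ i, ω (z.2 (lst d hd)) i * z.2 i

/-- The map `Ψ_n(θ, r) = (θ̃, θ_d − (1/2π) Σ_j (d/ds)[φ_j(s)/⟨ω̃(s), k_j⟩] cos(2π⟨k_j, θ̃⟩),
r̃ − Σ_j (φ_j(s)/⟨ω̃(s), k_j⟩) sin(2π⟨k_j, θ̃⟩) k_j, s)`, with `s = r_d`. -/
def Psin (d n : ℕ) (hd : 0 < d) (ω : ℝ → Fin d → ℝ) (k : ℕ → Fin (d - 1) → ℤ)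
    (φ : ℕ → ℝ → ℝ) (z : Phase d) : Phase d :=
  (fun i => if i = lst d hd then
      z.1 (lst d hd) - (1 / (2 * π)) * ∑ j ∈ Finset.Icc 2 n,
        deriv (fun s => φ j s / Aj d ω k j s) (z.2 (lst d hd)) *
          Real.cos (2 * π * ∑ i', (k j i' : ℝ) * z.1 (emb d i'))
    else z.1 i,
   fun i => if h : (i : ℕ) < d - 1 then
      z.2 i - ∑ j ∈ Finset.Icc 2 n,
        (φ j (z.2 (lst d hd)) / Aj d ω k j (z.2 (lst d hd))) *
          Real.sin (2 * π * ∑ i', (k j i' : ℝ) * z.1 (emb d i')) * (k j ⟨i, h⟩ : ℝ)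
    else z.2 i)

/-!
Since `H_n` does not depend on `θ_d`, the action `s = r_d` is conserved along a solution, so
every coefficient that depends only on `s` is constant in time, while each phase `⟨k_j, θ̃⟩`
advances at the constant speed `A_j(s) = ⟨ω̃(s), k_j⟩`. Write `g_j = φ_j / A_j` (`psinCoeff`).
Differentiating `Ψ_n` along the solution, the forcing `2π φ_j cos(2π⟨k_j, θ̃⟩) k_j` in `r̃'`
cancels because `g_j A_j = φ_j`, and the terms `φ_j' sin(2π⟨k_j, θ̃⟩)` in `θ_d'` cancel by the
product rule `φ_j' = g_j' A_j + g_j A_j'`, the term `g_j A_j'` being exactly what the shift of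
`r̃` contributes to `∂H_0/∂r_d = ω_d(s) + ⟨ω'(s), r⟩`.
-/

open Finset

theorem deriv_div_mul_add_div_mul_deriv {f g : ℝ → ℝ} {x : ℝ} (hf : DifferentiableAt ℝ f x)
    (hg : DifferentiableAt ℝ g x) (hgx : g x ≠ 0) :
    deriv (fun y => f y / g y) x * g x + f x / g x * deriv g x = deriv f x := by
  rw [deriv_fun_div hf hg hgx]
  field_simp
  ring

def kDot {d : ℕ} (k : ℕ → Fin (d - 1) → ℤ) (j : ℕ) (θ : Fin d → ℝ) : ℝ :=
  ∑ i, (k j i : ℝ) * θ (emb d i)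

def perturbation (d n : ℕ) (hd : 0 < d) (k : ℕ → Fin (d - 1) → ℤ) (φ : ℕ → ℝ → ℝ)
    (z : Phase d) : ℝ :=
  ∑ j ∈ Finset.Icc 2 n, φ j (z.2 (lst d hd)) * sin (2 * π * kDot k j z.1)

def psinCoeff (d : ℕ) (ω : ℝ → Fin d → ℝ) (k : ℕ → Fin (d - 1) → ℤ) (φ : ℕ → ℝ → ℝ) (j : ℕ)
    (s : ℝ) : ℝ :=
  φ j s / Aj d ω k j s

theorem kDot_zero {d : ℕ} (k : ℕ → Fin (d - 1) → ℤ) (j : ℕ) : kDot k j 0 = 0 := by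
  simp [kDot]

theorem kDot_single_emb {d : ℕ} (k : ℕ → Fin (d - 1) → ℤ) (j : ℕ) (i : Fin (d - 1)) :
    kDot k j (Pi.single (emb d i) 1) = k j i := by
  simp [kDot, Pi.single_apply, emb]

theorem Aj_eq_kDot {d : ℕ} (ω : ℝ → Fin d → ℝ) (k : ℕ → Fin (d - 1) → ℤ) (j : ℕ) (s : ℝ) :
    Aj d ω k j s = kDot k j (ω s) :=
  sum_congr rfl fun _ _ => mul_comm _ _

theorem hasDerivAt_Aj {d : ℕ} {ω : ℝ → Fin d → ℝ} {s : ℝ} (hω : DifferentiableAt ℝ ω s)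
    (k : ℕ → Fin (d - 1) → ℤ) (j : ℕ) : HasDerivAt (Aj d ω k j) (kDot k j (deriv ω s)) s := by
  rw [show kDot k j (deriv ω s) = ∑ i, deriv ω s (emb d i) * k j i from (Aj_eq_kDot _ k j s).symm]
  exact HasDerivAt.fun_sum fun i _ => (hasDerivAt_pi.mp hω.hasDerivAt (emb d i)).mul_const _

theorem contDiff_Aj {d : ℕ} {ω : ℝ → Fin d → ℝ} {n : WithTop ℕ∞} (hω : ContDiff ℝ n ω)
    (k : ℕ → Fin (d - 1) → ℤ) (j : ℕ) : ContDiff ℝ n (Aj d ω k j) :=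
  ContDiff.sum fun i _ => (contDiff_pi.mp hω (emb d i)).mul contDiff_const

theorem deriv_eq_deriv_psinCoeff_mul_Aj_add {d : ℕ} {ω : ℝ → Fin d → ℝ}
    {k : ℕ → Fin (d - 1) → ℤ} {φ : ℕ → ℝ → ℝ} {j : ℕ} {s : ℝ} (hω : DifferentiableAt ℝ ω s)
    (hφ : DifferentiableAt ℝ (φ j) s) (hA : Aj d ω k j s ≠ 0) :
    deriv (φ j) s = deriv (psinCoeff d ω k φ j) s * Aj d ω k j s +
      psinCoeff d ω k φ j s * kDot k j (deriv ω s) := by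
  rw [← (hasDerivAt_Aj hω k j).deriv]
  exact (deriv_div_mul_add_div_mul_deriv hφ (hasDerivAt_Aj hω k j).differentiableAt hA).symm

section

variable {d : ℕ} (hd : 0 < d)

local notation "ℓ" => lst d hd

theorem emb_ne_lst (i : Fin (d - 1)) : emb d i ≠ ℓ := by
  simp only [ne_eq, Fin.ext_iff, emb, lst, Fin.val_castLE]
  omega

theorem eq_lst_or_exists_eq_emb (m : Fin d) : m = ℓ ∨ ∃ i, m = emb d i := by
  by_cases h : (m : ℕ) < d - 1
  · exact Or.inr ⟨⟨m, h⟩, rfl⟩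
  · exact Or.inl (Fin.ext (by simp only [lst]; omega))

theorem sum_eq_sum_emb_add_lst {M : Type*} [AddCommMonoid M] (F : Fin d → M) :
    ∑ i, F i = ∑ i, F (emb d i) + F ℓ := by
  obtain ⟨e, rfl⟩ : ∃ e, d = e + 1 := ⟨d - 1, by omega⟩
  exact Fin.sum_univ_castSucc F

theorem kDot_single_lst (k : ℕ → Fin (d - 1) → ℤ) (j : ℕ) : kDot k j (Pi.single ℓ 1) = 0 := by
  simp [kDot, emb_ne_lst hd]

theorem Hn_eq_H0_sub_perturbation (n : ℕ) (ω : ℝ → Fin d → ℝ) (k : ℕ → Fin (d - 1) → ℤ)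
    (φ : ℕ → ℝ → ℝ) : Hn d n hd ω k φ = H0 d hd ω - perturbation d n hd k φ :=
  rfl

theorem hasFDerivAt_fst_apply (z : Phase d) (i : Fin d) :
    HasFDerivAt (fun z : Phase d => z.1 i)
      ((ContinuousLinearMap.proj i).comp (ContinuousLinearMap.fst ℝ (Fin d → ℝ) (Fin d → ℝ))) z :=
  (hasFDerivAt_apply (𝕜 := ℝ) i z.1).comp z hasFDerivAt_fst

theorem hasFDerivAt_snd_apply (z : Phase d) (i : Fin d) :
    HasFDerivAt (fun z : Phase d => z.2 i)
      ((ContinuousLinearMap.proj i).comp (ContinuousLinearMap.snd ℝ (Fin d → ℝ) (Fin d → ℝ))) z :=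
  (hasFDerivAt_apply (𝕜 := ℝ) i z.2).comp z hasFDerivAt_snd

theorem hasFDerivAt_H0 {ω : ℝ → Fin d → ℝ} {θ r : Fin d → ℝ} (hω : DifferentiableAt ℝ ω (r ℓ)) :
    ∃ L : Phase d →L[ℝ] ℝ, HasFDerivAt (H0 d hd ω) L (θ, r) ∧ ∀ v w, L (v, w) =
      ∑ i, ω (r ℓ) i * w i + w ℓ * ∑ i, r i * deriv ω (r ℓ) i := by
  have h := HasFDerivAt.fun_sum (u := univ) fun i _ =>
    ((hasDerivAt_pi.mp hω.hasDerivAt i).comp_hasFDerivAt (θ, r)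
      (hasFDerivAt_snd_apply (θ, r) ℓ)).fun_mul (hasFDerivAt_snd_apply (θ, r) i)
  refine ⟨_, h, fun v w => ?_⟩
  simp [sum_add_distrib, mul_sum]
  exact sum_congr rfl fun _ _ => by ring

theorem hasFDerivAt_perturbation (n : ℕ) (k : ℕ → Fin (d - 1) → ℤ) {φ : ℕ → ℝ → ℝ}
    {θ r : Fin d → ℝ} (hφ : ∀ j ∈ Finset.Icc 2 n, DifferentiableAt ℝ (φ j) (r ℓ)) :
    ∃ L : Phase d →L[ℝ] ℝ, HasFDerivAt (perturbation d n hd k φ) L (θ, r) ∧ ∀ v w, L (v, w) =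
      ∑ j ∈ Finset.Icc 2 n, (w ℓ * deriv (φ j) (r ℓ) * sin (2 * π * kDot k j θ) +
        2 * π * φ j (r ℓ) * cos (2 * π * kDot k j θ) * kDot k j v) := by
  have hkDot (j : ℕ) := HasFDerivAt.fun_sum (u := univ) fun i _ =>
    (hasFDerivAt_fst_apply (θ, r) (emb d i)).const_mul (k j i : ℝ)
  have h := HasFDerivAt.fun_sum (u := Finset.Icc 2 n) fun j hj =>
    ((hφ j hj).hasDerivAt.comp_hasFDerivAt (θ, r)
      (hasFDerivAt_snd_apply (θ, r) ℓ)).fun_mul (((hkDot j).const_mul (2 * π)).sin)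
  refine ⟨_, h, fun v w => ?_⟩
  simp [kDot]
  exact sum_congr rfl fun _ _ => by ring

theorem fderiv_H0_apply {ω : ℝ → Fin d → ℝ} {θ r : Fin d → ℝ} (hω : DifferentiableAt ℝ ω (r ℓ))
    (v w : Fin d → ℝ) :
    fderiv ℝ (H0 d hd ω) (θ, r) (v, w) =
      ∑ i, ω (r ℓ) i * w i + w ℓ * ∑ i, r i * deriv ω (r ℓ) i := by
  obtain ⟨L, hL, hLvw⟩ := hasFDerivAt_H0 hd (θ := θ) hω
  rw [hL.fderiv, hLvw]

theorem fderiv_Hn_apply (n : ℕ) {ω : ℝ → Fin d → ℝ} (k : ℕ → Fin (d - 1) → ℤ) {φ : ℕ → ℝ → ℝ}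
    {θ r : Fin d → ℝ} (hω : DifferentiableAt ℝ ω (r ℓ))
    (hφ : ∀ j ∈ Finset.Icc 2 n, DifferentiableAt ℝ (φ j) (r ℓ)) (v w : Fin d → ℝ) :
    fderiv ℝ (Hn d n hd ω k φ) (θ, r) (v, w) =
      ∑ i, ω (r ℓ) i * w i + w ℓ * ∑ i, r i * deriv ω (r ℓ) i -
        ∑ j ∈ Finset.Icc 2 n, (w ℓ * deriv (φ j) (r ℓ) * sin (2 * π * kDot k j θ) +
          2 * π * φ j (r ℓ) * cos (2 * π * kDot k j θ) * kDot k j v) := by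
  obtain ⟨L₀, h₀, h₀vw⟩ := hasFDerivAt_H0 hd (θ := θ) hω
  obtain ⟨L₁, h₁, h₁vw⟩ := hasFDerivAt_perturbation hd n k (θ := θ) hφ
  rw [Hn_eq_H0_sub_perturbation, (h₀.sub h₁).fderiv, sub_apply, h₀vw, h₁vw]

variable (n : ℕ) (ω : ℝ → Fin d → ℝ) (k : ℕ → Fin (d - 1) → ℤ) (φ : ℕ → ℝ → ℝ) (z : Phase d)

theorem Psin_fst_of_ne_lst {m : Fin d} (hm : m ≠ ℓ) : (Psin d n hd ω k φ z).1 m = z.1 m :=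
  if_neg hm

theorem Psin_fst_lst : (Psin d n hd ω k φ z).1 ℓ = z.1 ℓ - 1 / (2 * π) *
    ∑ j ∈ Finset.Icc 2 n, deriv (psinCoeff d ω k φ j) (z.2 ℓ) * cos (2 * π * kDot k j z.1) :=
  if_pos rfl

theorem Psin_snd_lst : (Psin d n hd ω k φ z).2 ℓ = z.2 ℓ :=
  dif_neg (by simp [lst])

theorem Psin_snd_emb (i : Fin (d - 1)) : (Psin d n hd ω k φ z).2 (emb d i) = z.2 (emb d i) -
    ∑ j ∈ Finset.Icc 2 n, psinCoeff d ω k φ j (z.2 ℓ) * sin (2 * π * kDot k j z.1) * k j i :=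
  dif_pos i.isLt

theorem sum_Psin_snd_mul (c : Fin d → ℝ) : ∑ i, (Psin d n hd ω k φ z).2 i * c i =
    ∑ i, z.2 i * c i - ∑ j ∈ Finset.Icc 2 n,
      psinCoeff d ω k φ j (z.2 ℓ) * sin (2 * π * kDot k j z.1) * kDot k j c := by
  have hswap : ∑ i, (∑ j ∈ Finset.Icc 2 n, psinCoeff d ω k φ j (z.2 ℓ) *
      sin (2 * π * kDot k j z.1) * k j i) * c (emb d i) = ∑ j ∈ Finset.Icc 2 n,
        psinCoeff d ω k φ j (z.2 ℓ) * sin (2 * π * kDot k j z.1) * kDot k j c := by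
    simp only [sum_mul]
    rw [sum_comm]
    refine sum_congr rfl fun j _ => ?_
    rw [show kDot k j c = ∑ i, (k j i : ℝ) * c (emb d i) from rfl, mul_sum]
    exact sum_congr rfl fun i _ => by ring
  rw [sum_eq_sum_emb_add_lst hd, sum_eq_sum_emb_add_lst hd (fun i => z.2 i * c i)]
  simp only [Psin_snd_emb, Psin_snd_lst, sub_mul, sum_sub_distrib, hswap]
  ring

end

namespace IsSolutionOn

variable {d n : ℕ} {hd : 0 < d} {ω : ℝ → Fin d → ℝ} {k : ℕ → Fin (d - 1) → ℤ} {φ : ℕ → ℝ → ℝ}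
  {θ r : ℝ → Fin d → ℝ} {J : Set ℝ} {t : ℝ}

local notation "ℓ" => lst d hd

theorem hasDerivWithinAt_angle_of_ne_lst (hsol : IsSolutionOn (Hn d n hd ω k φ) θ r J)
    (ht : t ∈ J) (hω : DifferentiableAt ℝ ω (r t ℓ))
    (hφ : ∀ j ∈ Finset.Icc 2 n, DifferentiableAt ℝ (φ j) (r t ℓ)) {m : Fin d} (hm : m ≠ ℓ) :
    HasDerivWithinAt (fun u => θ u m) (ω (r t ℓ) m) J t := by
  have h := (hsol t ht m).1
  rw [fderiv_Hn_apply hd n k hω hφ] at h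
  simpa [kDot_zero, Pi.single_apply, hm.symm] using h

theorem hasDerivWithinAt_angle_lst (hsol : IsSolutionOn (Hn d n hd ω k φ) θ r J)
    (ht : t ∈ J) (hω : DifferentiableAt ℝ ω (r t ℓ))
    (hφ : ∀ j ∈ Finset.Icc 2 n, DifferentiableAt ℝ (φ j) (r t ℓ)) :
    HasDerivWithinAt (fun u => θ u ℓ) (ω (r t ℓ) ℓ + ∑ i, r t i * deriv ω (r t ℓ) i -
      ∑ j ∈ Finset.Icc 2 n, deriv (φ j) (r t ℓ) * sin (2 * π * kDot k j (θ t))) J t := by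
  have h := (hsol t ht ℓ).1
  rw [fderiv_Hn_apply hd n k hω hφ] at h
  simpa [kDot_zero, Pi.single_apply] using h

theorem hasDerivWithinAt_action_lst (hsol : IsSolutionOn (Hn d n hd ω k φ) θ r J)
    (ht : t ∈ J) (hω : DifferentiableAt ℝ ω (r t ℓ))
    (hφ : ∀ j ∈ Finset.Icc 2 n, DifferentiableAt ℝ (φ j) (r t ℓ)) :
    HasDerivWithinAt (fun u => r u ℓ) 0 J t := by
  have h := (hsol t ht ℓ).2
  rw [fderiv_Hn_apply hd n k hω hφ] at h
  simpa [kDot_single_lst] using h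

theorem hasDerivWithinAt_action_emb (hsol : IsSolutionOn (Hn d n hd ω k φ) θ r J)
    (ht : t ∈ J) (hω : DifferentiableAt ℝ ω (r t ℓ))
    (hφ : ∀ j ∈ Finset.Icc 2 n, DifferentiableAt ℝ (φ j) (r t ℓ)) (i : Fin (d - 1)) :
    HasDerivWithinAt (fun u => r u (emb d i)) (∑ j ∈ Finset.Icc 2 n,
      2 * π * φ j (r t ℓ) * cos (2 * π * kDot k j (θ t)) * k j i) J t := by
  have h := (hsol t ht (emb d i)).2
  rw [fderiv_Hn_apply hd n k hω hφ] at h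
  simpa [kDot_single_emb] using h

theorem hasDerivWithinAt_kDot (hsol : IsSolutionOn (Hn d n hd ω k φ) θ r J)
    (ht : t ∈ J) (hω : DifferentiableAt ℝ ω (r t ℓ))
    (hφ : ∀ j ∈ Finset.Icc 2 n, DifferentiableAt ℝ (φ j) (r t ℓ)) (j : ℕ) :
    HasDerivWithinAt (fun u => kDot k j (θ u)) (Aj d ω k j (r t ℓ)) J t := by
  rw [Aj_eq_kDot]
  exact HasDerivWithinAt.fun_sum fun i _ =>
    (hsol.hasDerivWithinAt_angle_of_ne_lst ht hω hφ (emb_ne_lst hd i)).const_mul _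

theorem hasDerivWithinAt_comp_action_lst (hsol : IsSolutionOn (Hn d n hd ω k φ) θ r J)
    (ht : t ∈ J) (hω : DifferentiableAt ℝ ω (r t ℓ))
    (hφ : ∀ j ∈ Finset.Icc 2 n, DifferentiableAt ℝ (φ j) (r t ℓ)) {F : ℝ → ℝ}
    (hF : DifferentiableAt ℝ F (r t ℓ)) :
    HasDerivWithinAt (fun u => F (r u ℓ)) 0 J t := by
  have h := hF.hasDerivAt.comp_hasDerivWithinAt t (hsol.hasDerivWithinAt_action_lst ht hω hφ)
  rwa [mul_zero] at h

theorem hasDerivWithinAt_Psin_fst_of_ne_lst (hsol : IsSolutionOn (Hn d n hd ω k φ) θ r J)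
    (ht : t ∈ J) (hω : DifferentiableAt ℝ ω (r t ℓ))
    (hφ : ∀ j ∈ Finset.Icc 2 n, DifferentiableAt ℝ (φ j) (r t ℓ)) {m : Fin d} (hm : m ≠ ℓ) :
    HasDerivWithinAt (fun u => (Psin d n hd ω k φ (θ u, r u)).1 m) (ω (r t ℓ) m) J t := by
  simpa only [Psin_fst_of_ne_lst hd n ω k φ _ hm] using
    hsol.hasDerivWithinAt_angle_of_ne_lst ht hω hφ hm

theorem hasDerivWithinAt_Psin_snd (hsol : IsSolutionOn (Hn d n hd ω k φ) θ r J)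
    (ht : t ∈ J) (hω : DifferentiableAt ℝ ω (r t ℓ))
    (hφ : ∀ j ∈ Finset.Icc 2 n, DifferentiableAt ℝ (φ j) (r t ℓ))
    (hA : ∀ j ∈ Finset.Icc 2 n, Aj d ω k j (r t ℓ) ≠ 0) (m : Fin d) :
    HasDerivWithinAt (fun u => (Psin d n hd ω k φ (θ u, r u)).2 m) 0 J t := by
  rcases eq_lst_or_exists_eq_emb hd m with rfl | ⟨i, rfl⟩
  · simpa only [Psin_snd_lst] using hsol.hasDerivWithinAt_action_lst ht hω hφ
  have hc (j : ℕ) (hj : j ∈ Finset.Icc 2 n) :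
      HasDerivWithinAt (fun u => psinCoeff d ω k φ j (r u ℓ)) 0 J t :=
    hsol.hasDerivWithinAt_comp_action_lst ht hω hφ
      ((hφ j hj).div (hasDerivAt_Aj hω k j).differentiableAt (hA j hj))
  have h := (hsol.hasDerivWithinAt_action_emb ht hω hφ i).sub
    (HasDerivWithinAt.fun_sum fun j hj =>
      ((hc j hj).mul (((hsol.hasDerivWithinAt_kDot ht hω hφ j).const_mul (2 * π)).sin)).mul_const
        (k j i : ℝ))
  simp only [Psin_snd_emb]
  refine h.congr_deriv (sub_eq_zero.mpr (sum_congr rfl fun j hj => ?_))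
  rw [psinCoeff]
  field_simp [hA j hj]
  ring

theorem hasDerivWithinAt_Psin_fst_lst (hsol : IsSolutionOn (Hn d n hd ω k φ) θ r J)
    (ht : t ∈ J) (hω : ContDiff ℝ 2 ω)
    (hφ : ∀ j ∈ Finset.Icc 2 n, ContDiffAt ℝ 2 (φ j) (r t ℓ))
    (hA : ∀ j ∈ Finset.Icc 2 n, Aj d ω k j (r t ℓ) ≠ 0) :
    HasDerivWithinAt (fun u => (Psin d n hd ω k φ (θ u, r u)).1 ℓ)
      (ω (r t ℓ) ℓ + ∑ i, (Psin d n hd ω k φ (θ t, r t)).2 i * deriv ω (r t ℓ) i) J t := by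
  have hω₁ : DifferentiableAt ℝ ω (r t ℓ) := hω.differentiable (by norm_num) _
  have hφ₁ (j : ℕ) (hj : j ∈ Finset.Icc 2 n) : DifferentiableAt ℝ (φ j) (r t ℓ) :=
    (hφ j hj).differentiableAt (by norm_num)
  have hc (j : ℕ) (hj : j ∈ Finset.Icc 2 n) : ContDiffAt ℝ 2 (psinCoeff d ω k φ j) (r t ℓ) :=
    (hφ j hj).div (contDiff_Aj hω k j).contDiffAt (hA j hj)
  have hc' (j : ℕ) (hj : j ∈ Finset.Icc 2 n) :
      HasDerivWithinAt (fun u => deriv (psinCoeff d ω k φ j) (r u ℓ)) 0 J t :=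
    hsol.hasDerivWithinAt_comp_action_lst ht hω₁ hφ₁ <|
      (((hc j hj).fderiv_right (m := 1) (by norm_num)).differentiableAt (by norm_num)).clm_apply
        (differentiableAt_const 1)
  have h := (hsol.hasDerivWithinAt_angle_lst ht hω₁ hφ₁).sub
    ((HasDerivWithinAt.fun_sum fun j hj =>
      (hc' j hj).mul (((hsol.hasDerivWithinAt_kDot ht hω₁ hφ₁ j).const_mul (2 * π)).cos)).const_mul
        (1 / (2 * π)))
  simp only [Psin_fst_lst]
  refine h.congr_deriv ?_
  have hφ' : ∑ j ∈ Finset.Icc 2 n, deriv (φ j) (r t ℓ) * sin (2 * π * kDot k j (θ t)) =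
      ∑ j ∈ Finset.Icc 2 n, (deriv (psinCoeff d ω k φ j) (r t ℓ) * Aj d ω k j (r t ℓ) *
        sin (2 * π * kDot k j (θ t)) + psinCoeff d ω k φ j (r t ℓ) *
          sin (2 * π * kDot k j (θ t)) * kDot k j (deriv ω (r t ℓ))) :=
    sum_congr rfl fun j hj => by
      rw [deriv_eq_deriv_psinCoeff_mul_Aj_add hω₁ (hφ₁ j hj) (hA j hj)]; ring
  have hcos : 1 / (2 * π) * ∑ j ∈ Finset.Icc 2 n, (0 * cos (2 * π * kDot k j (θ t)) +
      deriv (psinCoeff d ω k φ j) (r t ℓ) *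
        (-sin (2 * π * kDot k j (θ t)) * (2 * π * Aj d ω k j (r t ℓ)))) =
      ∑ j ∈ Finset.Icc 2 n, -(deriv (psinCoeff d ω k φ j) (r t ℓ) * Aj d ω k j (r t ℓ) *
        sin (2 * π * kDot k j (θ t))) := by
    rw [mul_sum]
    exact sum_congr rfl fun j _ => by field_simp; ring
  rw [sum_Psin_snd_mul, hφ', hcos, sum_add_distrib, sum_neg_distrib]
  ring

end IsSolutionOn

/-- Under the stated hypotheses, if `(θ(t), r(t))` is a solution of
Hamilton's equations for `H_n` on an interval `J` with `r_d(t) ∈ I`, then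
`t ↦ Ψ_n(θ(t), r(t))` is a solution of Hamilton's equations for `H_0` on `J`. -/
theorem statement15 (d n : ℕ) (hd : 2 ≤ d)
    (ω : ℝ → Fin d → ℝ) (hω : ContDiff ℝ 2 ω)
    (k : ℕ → Fin (d - 1) → ℤ)
    (I : Set ℝ) (hIopen : IsOpen I)
    (φ : ℕ → ℝ → ℝ) (hφ : ∀ j ∈ Finset.Icc 2 n, ContDiffOn ℝ 2 (φ j) I)
    (hres : ∀ s ∈ I, ∀ j ∈ Finset.Icc 2 n, Aj d ω k j s ≠ 0)
    (θ r : ℝ → Fin d → ℝ) (J : Set ℝ)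
    (hJI : ∀ t ∈ J, r t (lst d (by omega)) ∈ I)
    (hsol : IsSolutionOn (Hn d n (by omega) ω k φ) θ r J) :
    IsSolutionOn (H0 d (by omega) ω)
      (fun t => (Psin d n (by omega) ω k φ (θ t, r t)).1)
      (fun t => (Psin d n (by omega) ω k φ (θ t, r t)).2) J := by
  have hd₀ : 0 < d := by omega
  intro t ht m
  have hs := hJI t ht
  have hφt (j : ℕ) (hj : j ∈ Finset.Icc 2 n) : ContDiffAt ℝ 2 (φ j) (r t (lst d hd₀)) :=
    (hφ j hj).contDiffAt (hIopen.mem_nhds hs)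
  have hω₁ : DifferentiableAt ℝ ω (r t (lst d hd₀)) := hω.differentiable (by norm_num) _
  have hφ₁ (j : ℕ) (hj : j ∈ Finset.Icc 2 n) : DifferentiableAt ℝ (φ j) (r t (lst d hd₀)) :=
    (hφt j hj).differentiableAt (by norm_num)
  have hA (j : ℕ) (hj : j ∈ Finset.Icc 2 n) := hres _ hs j hj
  have hωΨ : DifferentiableAt ℝ ω ((Psin d n hd₀ ω k φ (θ t, r t)).2 (lst d hd₀)) := by
    rwa [Psin_snd_lst]
  beta_reduce
  rw [fderiv_H0_apply hd₀ hωΨ, fderiv_H0_apply hd₀ hωΨ]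
  simp only [Psin_snd_lst, Pi.single_apply]
  refine ⟨?_, by simpa using hsol.hasDerivWithinAt_Psin_snd ht hω₁ hφ₁ hA m⟩
  rcases eq_or_ne m (lst d hd₀) with rfl | hm
  · simpa using hsol.hasDerivWithinAt_Psin_fst_lst ht hω hφt hA
  · simpa [hm.symm] using hsol.hasDerivWithinAt_Psin_fst_of_ne_lst ht hω₁ hφ₁ hm
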